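/- Let N = 1 and m > 1, and assume (H1). If u is a radial solution on [0,R), then F(u(0)) = 0, where F(u) = ∫₀^u f(τ) dτ. -/

import Mathlib

open Filter Set MeasureTheory intervalIntegral

noncomputable section

/-- The half-open interval `[0, R)` inside `ℝ`, where `R : EReal` may be `∞`. -/
def domR (R : EReal) : Set ℝ := {r : ℝ | 0 ≤ r ∧ (r : EReal) < R}

/-- The filter describing `r → R⁻` inside `ℝ` (it equals `atTop` when `R = ∞`). -/
def limR (R : EReal) : Filter ℝ := Filter.comap Real.toEReal (nhdsWithin R (Set.Iio R))

/-- Assumption (H1): `f` is continuous on `(0,∞)`, nonpositive on `(0,b]` and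
positive on `(b,∞)`, with `b > 0`. -/
def H1cond (b : ℝ) (f : ℝ → ℝ) : Prop :=
  0 < b ∧ ContinuousOn f (Set.Ioi 0) ∧
    (∀ u : ℝ, 0 < u → u ≤ b → f u ≤ 0) ∧ (∀ u : ℝ, b < u → 0 < f u)

/-- `u` (with derivative `u'`) is a radial solution on `[0, R)` of
`(r^{N-1} |u'|^{m-2} u')' = - r^{N-1} f(u)`, positive, `C¹` up to the origin,
with `u'(0) = 0` and `u, u' → 0` as `r → R`. -/
def IsRadialSolution (N : ℕ) (m : ℝ) (f : ℝ → ℝ) (R : EReal) (u u' : ℝ → ℝ) : Prop :=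
  0 < R ∧
  (∀ r ∈ domR R, HasDerivWithinAt u (u' r) (domR R) r) ∧
  ContinuousOn u' (domR R) ∧
  (∀ r ∈ domR R, 0 < u r) ∧
  u' 0 = 0 ∧
  (∀ r : ℝ, 0 < r → (r : EReal) < R →
    HasDerivAt (fun s : ℝ => s ^ (N - 1) * |u' s| ^ (m - 2) * u' s)
      (-(r ^ (N - 1) * f (u r))) r) ∧
  Filter.Tendsto u (limR R) (nhds 0) ∧
  Filter.Tendsto u' (limR R) (nhds 0)

/-- `rr` is the (strictly decreasing) inverse on `(0, α)` of a radial solution `u`,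
with derivatives `rr'`, `rr''`, satisfying the transformed ODE
`(m-1) r'' = (N-1) r'²/r + f(u) |r'|^m r'`. -/
def IsInvSol (N : ℕ) (m α : ℝ) (f : ℝ → ℝ) (R : EReal) (u rr rr' rr'' : ℝ → ℝ) : Prop :=
  (∀ v ∈ Set.Ioo 0 α,
    0 < rr v ∧ (rr v : EReal) < R ∧ u (rr v) = v ∧
    HasDerivAt rr (rr' v) v ∧ rr' v < 0 ∧ HasDerivAt rr' (rr'' v) v ∧
    (m - 1) * rr'' v = ((N : ℝ) - 1) * (rr' v) ^ 2 / rr v + f v * |rr' v| ^ m * rr' v) ∧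
  (∀ x : ℝ, 0 < x → (x : EReal) < R → ∃ v ∈ Set.Ioo 0 α, rr v = x)

/-- The function `ω(u) = r(u)^{N-1} / (r'(u) |r'(u)|^{m-2})`. -/
def omegaF (N : ℕ) (m : ℝ) (rr rr' : ℝ → ℝ) (v : ℝ) : ℝ :=
  rr v ^ (N - 1) / (rr' v * |rr' v| ^ (m - 2))

/-- The function `P(u) = a u ω(u) + r(u)^N ((m-1)/m · 1/|r'(u)|^m + (a/N) u f(u))`. -/
def PF (N : ℕ) (m a : ℝ) (f rr rr' : ℝ → ℝ) (v : ℝ) : ℝ :=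
  a * v * omegaF N m rr rr' v +
    rr v ^ N * ((m - 1) / m * (1 / |rr' v| ^ m) + a / (N : ℝ) * v * f v)

/-! For `N = 1` the equation reads `(|u'|^{m-2} u')' = -f(u)`. Multiplying by `u'` shows that the
energy `(m-1)/m |u'(r)|^m + F(u(r))` is constant. At `r = 0` it equals `F(u(0))` because
`u'(0) = 0`, and as `r → R` it tends to `F(0) = 0` because `u, u' → 0`. -/

open Topology

section PowerMap

variable {m q : ℝ}

lemma abs_abs_rpow_sub_two_mul (hm : m ≠ 1) (x : ℝ) :
    |(|x| ^ (m - 2) * x)| = |x| ^ (m - 1) := by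
  rcases eq_or_ne x 0 with rfl | hx
  · simp [Real.zero_rpow (sub_ne_zero.2 hm)]
  · rw [abs_mul, abs_of_nonneg (by positivity), show m - 1 = (m - 2) + 1 by ring,
      Real.rpow_add (abs_pos.2 hx), Real.rpow_one]

lemma abs_rpow_sub_two_mul_abs_rpow_sub_two_mul (h : m.HolderConjugate q) (x : ℝ) :
    |(|x| ^ (m - 2) * x)| ^ (q - 2) * (|x| ^ (m - 2) * x) = x := by
  rcases eq_or_ne x 0 with rfl | hx
  · simp
  have hx' : 0 < |x| := abs_pos.2 hx
  have hexp : (m - 1) * (q - 2) + (m - 2) = 0 := by linear_combination h.sub_one_mul_conj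
  rw [abs_abs_rpow_sub_two_mul (sub_ne_zero.1 h.sub_one_ne_zero) x, ← Real.rpow_mul hx'.le,
    ← mul_assoc, ← Real.rpow_add hx', hexp, Real.rpow_zero, one_mul]

end PowerMap

lemma HasDerivAt.energy_of_flux {m c r : ℝ} {v : ℝ → ℝ} (hm : 1 < m)
    (h : HasDerivAt (fun s => |v s| ^ (m - 2) * v s) c r) :
    HasDerivAt (fun s => (m - 1) / m * |v s| ^ m) (c * v r) r := by
  obtain ⟨q, hmq⟩ : ∃ q, m.HolderConjugate q := ⟨_, .conjExponent hm⟩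
  -- `(m-1)/m |v|^m = |w|^q / q` for `w = |v|^{m-2} v` and the conjugate exponent `q`, and the
  -- derivative `|w|^{q-2} w` of `|·|^q / q` at `w` is `v` again
  have hfun : (fun s => (m - 1) / m * |v s| ^ m) =
      (fun y => q⁻¹ * |y| ^ q) ∘ fun s => |v s| ^ (m - 2) * v s := by
    funext s
    have hq : q⁻¹ = (m - 1) / m := by rw [← hmq.one_sub_inv]; field_simp [hmq.ne_zero]
    rw [Function.comp_apply, hq, abs_abs_rpow_sub_two_mul hm.ne' (v s),
      ← Real.rpow_mul (abs_nonneg _), hmq.sub_one_mul_conj]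
  rw [hfun]
  refine (((hasDerivAt_abs_rpow _ hmq.symm.lt).const_mul q⁻¹).comp r h).congr_deriv ?_
  have hinv := abs_rpow_sub_two_mul_abs_rpow_sub_two_mul hmq (v r)
  field_simp [hmq.symm.ne_zero]
  linear_combination c * hinv

section LimR

variable {R : EReal}

lemma Ioi_zero_inter_Iio_mem_nhdsLT (hR : 0 < R) : Ioi 0 ∩ Iio R ∈ 𝓝[<] R :=
  inter_mem (mem_nhdsWithin_of_mem_nhds (isOpen_Ioi.mem_nhds hR)) self_mem_nhdsWithin

lemma eventually_limR (hR : 0 < R) : ∀ᶠ r : ℝ in limR R, 0 < r ∧ (r : EReal) < R := by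
  filter_upwards [preimage_mem_comap (Ioi_zero_inter_Iio_mem_nhdsLT hR)] with r hr
  exact ⟨EReal.coe_pos.1 hr.1, hr.2⟩

lemma limR_neBot (hR : 0 < R) : (limR R).NeBot := by
  refine (nhdsLT_neBot_of_exists_lt ⟨0, hR⟩).comap_of_range_mem
    (mem_of_superset (Ioi_zero_inter_Iio_mem_nhdsLT hR) ?_)
  rintro x ⟨hx0, hxR⟩
  exact ⟨x.toReal, EReal.coe_toReal (hxR.trans_le le_top).ne (hx0.trans' EReal.bot_lt_zero).ne'⟩

end LimR

lemma tendsto_integral_left_of_tendsto {ι : Type*} {l : Filter ι} {f : ℝ → ℝ} {g : ι → ℝ}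
    {a : ℝ}
    (hf : IntervalIntegrable f volume 0 a) (hg : Tendsto g l (𝓝[uIcc 0 a] 0)) :
    Tendsto (fun i => ∫ τ in g i..a, f τ) l (𝓝 (∫ τ in 0..a, f τ)) :=
  ((continuousOn_primitive_interval_left ((intervalIntegrable_iff').1 hf)) 0
    left_mem_uIcc).tendsto.comp hg

section RadialSolution

variable {N : ℕ} {m : ℝ} {f : ℝ → ℝ} {R : EReal} {u u' : ℝ → ℝ} {r : ℝ}

lemma Icc_zero_subset_domR (hrR : (r : EReal) < R) : Icc 0 r ⊆ domR R :=
  fun _ hx => ⟨hx.1, (EReal.coe_le_coe_iff.2 hx.2).trans_lt hrR⟩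

lemma domR_mem_nhds (hr : 0 < r) (hrR : (r : EReal) < R) : domR R ∈ 𝓝 r :=
  mem_of_superset (inter_mem (Ioi_mem_nhds hr)
    ((isOpen_Iio.preimage continuous_coe_real_ereal).mem_nhds hrR)) fun _ hx => ⟨hx.1.le, hx.2⟩

namespace IsRadialSolution

lemma hasDerivAt (hu : IsRadialSolution N m f R u u') (hr : 0 < r) (hrR : (r : EReal) < R) :
    HasDerivAt u (u' r) r :=
  (hu.2.1 r ⟨hr.le, hrR⟩).hasDerivAt (domR_mem_nhds hr hrR)

lemma continuousOn (hu : IsRadialSolution N m f R u u') : ContinuousOn u (domR R) :=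
  fun r hr => (hu.2.1 r hr).continuousWithinAt

lemma hasDerivAt_energy (hu : IsRadialSolution 1 m f R u u') (hm : 1 < m) (hr : 0 < r)
    (hrR : (r : EReal) < R) :
    HasDerivAt (fun s => (m - 1) / m * |u' s| ^ m) (-f (u r) * u' r) r :=
  .energy_of_flux hm (by simpa using hu.2.2.2.2.2.1 r hr hrR)

lemma integral_eq_energy (hu : IsRadialSolution 1 m f R u u') (hm : 1 < m)
    (hf : ContinuousOn f (Ioi 0)) (hr : 0 < r) (hrR : (r : EReal) < R) :
    ∫ τ in u r..u 0, f τ = (m - 1) / m * |u' r| ^ m := by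
  have hsub := Icc_zero_subset_domR hrR
  have huIcc : uIcc 0 r = Icc 0 r := uIcc_of_le hr.le
  have hu_cont : ContinuousOn u (Icc 0 r) := hu.continuousOn.mono hsub
  have hu'_cont : ContinuousOn u' (Icc 0 r) := hu.2.2.1.mono hsub
  have hf_cont : ContinuousOn f (u '' Icc 0 r) :=
    hf.mono <| image_subset_iff.2 fun x hx => hu.2.2.2.1 x (hsub hx)
  have hmem {x : ℝ} (hx : x ∈ Ioo 0 r) : (x : EReal) < R :=
    (EReal.coe_lt_coe_iff.2 hx.2).trans hrR
  have hsubst : ∫ s in 0..r, u' s • (f ∘ u) s = ∫ τ in u 0..u r, f τ := by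
    refine integral_deriv_smul_comp'' (huIcc ▸ hu_cont) ?_ (huIcc ▸ hu'_cont) (huIcc ▸ hf_cont)
    rw [min_eq_left hr.le, max_eq_right hr.le]
    exact fun x hx => (hu.hasDerivAt hx.1 (hmem hx)).hasDerivWithinAt
  have hftc : ∫ s in 0..r, -f (u s) * u' s =
      (m - 1) / m * |u' r| ^ m - (m - 1) / m * |u' 0| ^ m := by
    refine integral_eq_sub_of_hasDerivAt_of_le hr.le ?_
      (fun x hx => hu.hasDerivAt_energy hm hx.1 (hmem hx)) ?_
    · exact continuousOn_const.mul (hu'_cont.abs.rpow_const fun _ _ => Or.inr (by linarith))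
    · refine ContinuousOn.intervalIntegrable ?_
      rw [huIcc]
      exact ((hf_cont.comp hu_cont (mapsTo_image u _)).neg).mul hu'_cont
  have henergy_zero : (m - 1) / m * |u' 0| ^ m = 0 := by
    rw [hu.2.2.2.2.1, abs_zero, Real.zero_rpow (by linarith), mul_zero]
  calc ∫ τ in u r..u 0, f τ = -∫ s in 0..r, u' s • (f ∘ u) s := by rw [integral_symm, hsubst]
    _ = ∫ s in 0..r, -f (u s) * u' s := by
      rw [← intervalIntegral.integral_neg]
      congr with s
      simp only [smul_eq_mul, Function.comp_apply]
      ring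
    _ = (m - 1) / m * |u' r| ^ m := by rw [hftc, henergy_zero, sub_zero]

end IsRadialSolution

end RadialSolution

/-- for `N = 1`, `m > 1`, under (H1), any radial solution satisfies
`F(u(0)) = 0`, where `F(u) = ∫₀^u f(τ) dτ`. -/
theorem stmt7 (m b : ℝ) (f : ℝ → ℝ) (hm : 1 < m) (hf : H1cond b f)
    (R : EReal) (u u' : ℝ → ℝ) (hu : IsRadialSolution 1 m f R u u') :
    (∫ τ in (0 : ℝ)..(u 0), f τ) = 0 := by
  have ⟨hR, _, _, hupos, _, _, hulim, hu'lim⟩ := hu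
  -- if `f` is not integrable on `[0, u 0]`, the integral is the junk value `0`
  by_cases hint : IntervalIntegrable f volume 0 (u 0)
  swap
  · exact integral_undef hint
  have hu0 : 0 < u 0 := hupos 0 ⟨le_rfl, by simpa using hR⟩
  have := limR_neBot hR
  have hu_within : Tendsto u (limR R) (𝓝[uIcc 0 (u 0)] 0) := by
    refine tendsto_nhdsWithin_iff.2 ⟨hulim, ?_⟩
    filter_upwards [eventually_limR hR, hulim.eventually_lt_const hu0] with r hr hr0
    rw [uIcc_of_le hu0.le]
    exact ⟨(hupos r ⟨hr.1.le, hr.2⟩).le, hr0.le⟩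
  have henergy : Tendsto (fun r => (m - 1) / m * |u' r| ^ m) (limR R) (𝓝 0) := by
    have hcont : Continuous fun x : ℝ => (m - 1) / m * |x| ^ m :=
      (continuous_abs.rpow_const fun _ => Or.inr (by linarith)).const_mul _
    simpa [Function.comp_def, Real.zero_rpow (by linarith : m ≠ 0)] using
      (hcont.tendsto 0).comp hu'lim
  refine tendsto_nhds_unique (tendsto_integral_left_of_tendsto hint hu_within) (henergy.congr' ?_)
  filter_upwards [eventually_limR hR] with r hr
  exact (hu.integral_eq_energy hm hf.2.1 hr.1 hr.2).symm

end
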